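/- For the discontinuous function $F_a$ defined by $F_a(t)=F(t)-at$ for $t\geq 0$ and $F_a(t)=0$ for $t<0$ (with $f$ continuous, $f(0)=0$, $a>0$), the Clarke generalized directional derivative of $-F_a$ satisfies: $(-F_a)^0(t,s) = -(f(t)-a)s$ for $t>0$ and any $s$; $(-F_a)^0(0,s)=as$ for $s>0$; $(-F_a)^0(t,s)=0$ for $t<0$ or for $t=0, s\leq 0$. -/

import Mathlib

/-!
On all of `ℝ`, `F_a = Φ ∘ (· ⊔ 0)` with `Φ x = ∫₀ˣ f (u ⊔ 0) du - a x`, a `C¹` function with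
`Φ' = f (· ⊔ 0) - a`. Away from `0`, `-F_a` is strictly differentiable, and the Clarke derivative of
a strictly differentiable function is its ordinary derivative. At `0`, strict differentiability of
`Φ` (with `Φ' 0 = -a`) reduces the difference quotient of `-F_a`, up to `o(1)`, to `a` times the
difference quotient of `x ↦ x ⊔ 0`, whose `limsup` is `s ⊔ 0`.
-/

open MeasureTheory Filter

open Topology Asymptotics

noncomputable def clarkeDeriv (g : ℝ → ℝ) (t s : ℝ) : ℝ :=
  limsup (fun q : ℝ × ℝ => (g (q.2 + q.1 * s) - g q.2) / q.1) (𝓝[>] 0 ×ˢ 𝓝 t)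

theorem Filter.limsup_add_eq_of_tendsto_zero {α : Type*} {l : Filter α} {u w : α → ℝ} {c : ℝ}
    (hw : Tendsto w l (𝓝 0)) (hu : ∀ᶠ i in l, u i ≤ c) (hc : ∃ᶠ i in l, u i = c) :
    limsup (fun i => u i + w i) l = c := by
  have hupper : ∀ ε > 0, ∀ᶠ i in l, u i + w i ≤ c + ε := fun ε hε =>
    (hu.and (hw.eventually (gt_mem_nhds hε))).mono fun i h => by linarith [h.1, h.2]
  have hlower : ∀ ε > 0, ∃ᶠ i in l, c - ε ≤ u i + w i := fun ε hε =>
    (hc.and_eventually (hw.eventually (lt_mem_nhds (neg_lt_zero.2 hε)))).mono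
      fun i h => by linarith [h.1, h.2]
  have hcobdd := IsCoboundedUnder.of_frequently_ge (hlower 1 one_pos)
  have hbdd := isBoundedUnder_of_eventually_le (hupper 1 one_pos)
  refine le_antisymm (le_of_forall_pos_le_add fun ε hε => limsup_le_of_le hcobdd (hupper ε hε))
    (le_of_forall_pos_le_add fun ε hε => ?_)
  linarith [le_limsup_of_frequently_le (hlower ε hε) hbdd]

theorem HasStrictDerivAt.tendsto_sub_sub_div {α : Type*} {l : Filter α} {Φ : ℝ → ℝ} {φ t : ℝ}
    (hΦ : HasStrictDerivAt Φ φ t) {x y ξ : α → ℝ} (hx : Tendsto x l (𝓝 t))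
    (hy : Tendsto y l (𝓝 t)) (hξ : (fun i => y i - x i) =O[l] ξ) :
    Tendsto (fun i => (Φ (y i) - Φ (x i) - (y i - x i) * φ) / ξ i) l (𝓝 0) :=
  ((hasDerivAtFilter_iff_isLittleO.mp hΦ).comp_tendsto (hy.prodMk_nhds hx)
    |>.trans_isBigO hξ).tendsto_div_nhds_zero

theorem HasStrictDerivAt.clarkeDeriv_eq {g : ℝ → ℝ} {g' t : ℝ} (hg : HasStrictDerivAt g g' t)
    (s : ℝ) : clarkeDeriv g t s = g' * s := by
  have hξ : Tendsto (fun q : ℝ × ℝ => q.1) (𝓝[>] 0 ×ˢ 𝓝 t) (𝓝 0) :=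
    tendsto_fst.mono_right nhdsWithin_le_nhds
  have hy : Tendsto (fun q : ℝ × ℝ => q.2 + q.1 * s) (𝓝[>] 0 ×ˢ 𝓝 t) (𝓝 t) := by
    simpa using tendsto_snd.add (hξ.mul_const s)
  have hrem := hg.tendsto_sub_sub_div (ξ := Prod.fst) tendsto_snd hy
    (.of_bound |s| (.of_forall fun q => by simp [mul_comm]))
  refine Tendsto.limsup_eq ?_
  have hpos : ∀ᶠ q : ℝ × ℝ in 𝓝[>] 0 ×ˢ 𝓝 t, 0 < q.1 :=
    tendsto_fst.eventually self_mem_nhdsWithin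
  refine (zero_add (g' * s) ▸ hrem.add_const (g' * s)).congr' (hpos.mono fun q hq => ?_)
  simp only [add_sub_cancel_left]
  field_simp
  ring

theorem HasStrictDerivAt.comp_max_zero_of_pos {Φ : ℝ → ℝ} {φ t : ℝ} (hΦ : HasStrictDerivAt Φ φ t)
    (ht : 0 < t) : HasStrictDerivAt (fun x => Φ (max x 0)) φ t :=
  hΦ.congr_of_eventuallyEq <| (lt_mem_nhds ht).mono fun x hx => by simp [max_eq_left hx.le]

theorem hasStrictDerivAt_comp_max_zero_of_neg (Φ : ℝ → ℝ) {t : ℝ} (ht : t < 0) :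
    HasStrictDerivAt (fun x => Φ (max x 0)) 0 t :=
  (hasStrictDerivAt_const t (Φ 0)).congr_of_eventuallyEq <|
    (gt_mem_nhds ht).mono fun x hx => by simp [max_eq_right hx.le]

theorem max_add_zero_sub_max_zero_le (τ d : ℝ) : max (τ + d) 0 - max τ 0 ≤ max d 0 := by
  rw [sub_le_iff_le_add]
  exact max_le (by linarith [le_max_left d 0, le_max_left τ 0]) (by positivity)

theorem HasStrictDerivAt.tendsto_comp_max_zero_sub_sub_div {Φ : ℝ → ℝ} {φ : ℝ}
    (hΦ : HasStrictDerivAt Φ φ 0) (s : ℝ) :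
    Tendsto (fun q : ℝ × ℝ => (Φ (max (q.2 + q.1 * s) 0) - Φ (max q.2 0) -
      (max (q.2 + q.1 * s) 0 - max q.2 0) * φ) / q.1) (𝓝[>] 0 ×ˢ 𝓝 0) (𝓝 0) := by
  have hξ : Tendsto (fun q : ℝ × ℝ => q.1) (𝓝[>] 0 ×ˢ 𝓝 0) (𝓝 0) :=
    tendsto_fst.mono_right nhdsWithin_le_nhds
  have hx : Tendsto (fun q : ℝ × ℝ => max q.2 0) (𝓝[>] 0 ×ˢ 𝓝 0) (𝓝 0) := by
    simpa only [max_self] using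
      (tendsto_snd (f := 𝓝[>] (0:ℝ)) (g := 𝓝 0)).max (tendsto_const_nhds (x := (0:ℝ)))
  have hy : Tendsto (fun q : ℝ × ℝ => max (q.2 + q.1 * s) 0) (𝓝[>] 0 ×ˢ 𝓝 0) (𝓝 0) := by
    have : Tendsto (fun q : ℝ × ℝ => q.2 + q.1 * s) (𝓝[>] 0 ×ˢ 𝓝 0) (𝓝 0) := by
      simpa using tendsto_snd.add (hξ.mul_const s)
    simpa only [max_self] using this.max (tendsto_const_nhds (x := (0:ℝ)))
  have hO : (fun q : ℝ × ℝ => max (q.2 + q.1 * s) 0 - max q.2 0) =O[𝓝[>] 0 ×ˢ 𝓝 0]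
      (fun q => q.1) := .of_bound |s| <| .of_forall fun q => by
    simpa [abs_mul, mul_comm] using abs_max_sub_max_le_abs (q.2 + q.1 * s) q.2 0
  exact hΦ.tendsto_sub_sub_div hx hy hO

theorem clarkeDeriv_neg_comp_max_zero {Φ : ℝ → ℝ} {φ : ℝ} (hΦ : HasStrictDerivAt Φ φ 0)
    (hφ : φ ≤ 0) (s : ℝ) : clarkeDeriv (fun x => -Φ (max x 0)) 0 s = -φ * max s 0 := by
  have hrem := (hΦ.tendsto_comp_max_zero_sub_sub_div s).neg
  rw [neg_zero] at hrem
  have hsplit : (fun q : ℝ × ℝ => (-Φ (max (q.2 + q.1 * s) 0) - -Φ (max q.2 0)) / q.1) =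
      fun q => -φ * ((max (q.2 + q.1 * s) 0 - max q.2 0) / q.1) +
        -((Φ (max (q.2 + q.1 * s) 0) - Φ (max q.2 0) - (max (q.2 + q.1 * s) 0 - max q.2 0) * φ)
          / q.1) := by
    ext q
    ring
  rw [clarkeDeriv, hsplit]
  refine limsup_add_eq_of_tendsto_zero hrem ?_ ?_
  · filter_upwards [tendsto_fst.eventually self_mem_nhdsWithin] with q (hq : 0 < q.1)
    refine mul_le_mul_of_nonneg_left ((div_le_iff₀ hq).2 ?_) (neg_nonneg.2 hφ)
    rw [max_mul_of_nonneg _ _ hq.le, zero_mul, mul_comm s]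
    exact max_add_zero_sub_max_zero_le q.2 (q.1 * s)
  · have hτ : ∀ᶠ q : ℝ × ℝ in 𝓝[>] 0 ×ˢ pure 0, 0 < q.1 ∧ q.2 = 0 :=
      eventually_mem_nhdsWithin.prod_mk (eventually_pure.2 rfl : ∀ᶠ τ in pure (0:ℝ), τ = 0)
    refine (hτ.frequently.filter_mono (prod_mono le_rfl (pure_le_nhds 0))).mono fun q hq => ?_
    have hscale : max (q.1 * s) 0 = q.1 * max s 0 := by rw [mul_max_of_nonneg _ _ hq.1.le, mul_zero]
    rw [hq.2, zero_add, max_self, sub_zero, hscale, mul_div_cancel_left₀ _ hq.1.ne']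

theorem ContinuousOn.hasStrictDerivAt_integral_comp_max_zero {f : ℝ → ℝ}
    (hf : ContinuousOn f (Set.Ici 0)) (t : ℝ) :
    HasStrictDerivAt (fun x => ∫ u in (0:ℝ)..x, f (max u 0)) (f (max t 0)) t :=
  (hf.comp_continuous (continuous_id.max continuous_const) fun u => le_max_right u 0)
    |>.integral_hasStrictDerivAt 0 t

theorem integral_comp_max_zero_of_nonneg (f : ℝ → ℝ) {x : ℝ} (hx : 0 ≤ x) :
    ∫ u in (0:ℝ)..x, f (max u 0) = ∫ u in (0:ℝ)..x, f u :=
  intervalIntegral.integral_congr fun u hu => by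
    rw [Set.uIcc_of_le hx] at hu
    rw [max_eq_left hu.1]

theorem stmt3_general (a : ℝ) (ha : 0 < a) (f F Fa : ℝ → ℝ)
    (hf_cont : ContinuousOn f (Set.Ici 0)) (hf0 : f 0 = 0)
    (hF : ∀ t, 0 ≤ t → F t = ∫ τ in (0:ℝ)..t, f τ)
    (hFa : ∀ t, Fa t = if 0 ≤ t then F t - a * t else 0)
    (G : ℝ → ℝ → ℝ)
    -- `G t s` is the Clarke generalized directional derivative
    -- `(-F_a)⁰(t,s) = limsup_{ξ↘0, τ→t} (-F_a(τ+ξs)+F_a(τ))/ξ`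
    (hG : ∀ t s, G t s =
      Filter.limsup (fun q : ℝ × ℝ => (-(Fa (q.2 + q.1 * s)) + Fa q.2) / q.1)
        ((nhdsWithin 0 (Set.Ioi 0)) ×ˢ (nhds t))) :
    (∀ t s : ℝ, 0 < t → G t s = -(f t - a) * s) ∧
    (∀ s : ℝ, 0 < s → G 0 s = a * s) ∧
    (∀ t s : ℝ, t < 0 → G t s = 0) ∧
    (∀ s : ℝ, s ≤ 0 → G 0 s = 0) := by
  set Φ : ℝ → ℝ := fun x => (∫ u in (0:ℝ)..x, f (max u 0)) - a * x
  have hΦ (t : ℝ) : HasStrictDerivAt Φ (f (max t 0) - a) t := by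
    simpa using (hf_cont.hasStrictDerivAt_integral_comp_max_zero t).fun_sub
      ((hasStrictDerivAt_id t).const_mul a)
  have hFa_eq (x : ℝ) : Fa x = Φ (max x 0) := by
    rcases le_or_gt 0 x with hx | hx
    · simp [Φ, hFa, hx, hF, integral_comp_max_zero_of_nonneg]
    · simp [Φ, hFa, hx.not_ge, max_eq_right hx.le]
  have hG_eq (t s : ℝ) : G t s = clarkeDeriv (fun x => -Φ (max x 0)) t s := by
    simp only [hG, clarkeDeriv, hFa_eq, sub_neg_eq_add]
  have hΦ0 : HasStrictDerivAt Φ (-a) 0 := by simpa [hf0] using hΦ 0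
  refine ⟨fun t s ht => ?_, fun s hs => ?_, fun t s ht => ?_, fun s hs => ?_⟩
  · rw [hG_eq, ((hΦ t).comp_max_zero_of_pos ht).fun_neg.clarkeDeriv_eq, max_eq_left ht.le]
  · rw [hG_eq, clarkeDeriv_neg_comp_max_zero hΦ0 (neg_nonpos.2 ha.le), neg_neg, max_eq_left hs.le]
  · rw [hG_eq, (hasStrictDerivAt_comp_max_zero_of_neg Φ ht).fun_neg.clarkeDeriv_eq, neg_zero, zero_mul]
  · rw [hG_eq, clarkeDeriv_neg_comp_max_zero hΦ0 (neg_nonpos.2 ha.le), max_eq_right hs, mul_zero]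

/-- explicit computation of the Clarke generalized directional
    derivative of `-F_a`. -/
theorem stmt3 (a : ℝ) (ha : 0 < a) (f F Fa : ℝ → ℝ)
    (hf_cont : ContinuousOn f (Set.Ici 0)) (hf0 : f 0 = 0)
    (hf_nonneg : ∀ t, 0 ≤ t → 0 ≤ f t)
    (hF : ∀ t, 0 ≤ t → F t = ∫ τ in (0:ℝ)..t, f τ)
    (hFa : ∀ t, Fa t = if 0 ≤ t then F t - a * t else 0)
    (G : ℝ → ℝ → ℝ)
    -- `G t s` is the Clarke generalized directional derivative
    -- `(-F_a)⁰(t,s) = limsup_{ξ↘0, τ→t} (-F_a(τ+ξs)+F_a(τ))/ξ`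
    (hG : ∀ t s, G t s =
      Filter.limsup (fun q : ℝ × ℝ => (-(Fa (q.2 + q.1 * s)) + Fa q.2) / q.1)
        ((nhdsWithin 0 (Set.Ioi 0)) ×ˢ (nhds t))) :
    (∀ t s : ℝ, 0 < t → G t s = -(f t - a) * s) ∧
    (∀ s : ℝ, 0 < s → G 0 s = a * s) ∧
    (∀ t s : ℝ, t < 0 → G t s = 0) ∧
    (∀ s : ℝ, s ≤ 0 → G 0 s = 0) :=
  stmt3_general a ha f F Fa hf_cont hf0 hF hFa G hG
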